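/- Define k : [0,∞) → (0,1] by k(0) = 1 and k(x) = (1/x)·tanh((ln 2)/x) − (1/ln 2)·ln cosh((ln 2)/x) for x > 0. Then k is continuous and monotone decreasing, and k is the inverse function of the derivative γ′ : (0,1] → [0,∞) of γ, where γ is the inverse of γ⁻¹(x) = ((1−x)/(2 ln 2))·ln(1−x) + ((1+x)/(2 ln 2))·ln(1+x) restricted to [0,1]. -/

import Mathlib

/-!
With `x = tanh u` one has `1 ± x = e^{±u} / cosh u`, so
`γ⁻¹ (tanh u) = (u tanh u - log cosh u) / log 2` and `(γ⁻¹)' x = artanh x / log 2`.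
Hence `k t = γ⁻¹ (tanh (log 2 / t))`, while the inverse function rule gives
`γ' (γ⁻¹ x) = log 2 / artanh x` for `0 < x < 1`: the two formulas are inverse to each other.
At the endpoint the slopes of `γ⁻¹` at `1` blow up because `artanh x → ∞`, which forces
`γ' 1 = 0`, matching `k 0 = 1`.
-/

open Real Set

noncomputable def gammaInv (x : ℝ) : ℝ :=
  (1 - x) / (2 * Real.log 2) * Real.log (1 - x)
    + (1 + x) / (2 * Real.log 2) * Real.log (1 + x)

noncomputable def kFun (x : ℝ) : ℝ :=
  if x = 0 then 1
  else (1 / x) * Real.tanh (Real.log 2 / x) - (1 / Real.log 2) * Real.log (Real.cosh (Real.log 2 / x))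

open Filter Topology

namespace Real

theorem log_two_pos : 0 < log 2 := log_pos one_lt_two

theorem tanh_strictMono : StrictMono tanh := fun a b hab => by
  have mem (u : ℝ) : tanh u ∈ Ioo (-1) 1 := ⟨neg_one_lt_tanh u, tanh_lt_one u⟩
  rwa [← artanh_lt_artanh_iff (mem a) (mem b), artanh_tanh, artanh_tanh]

theorem tanh_mem_Ioo_zero_one {u : ℝ} (hu : 0 < u) : tanh u ∈ Ioo 0 1 :=
  ⟨by simpa using tanh_strictMono hu, tanh_lt_one u⟩

theorem continuous_tanh : Continuous tanh := by
  simp only [funext tanh_eq_sinh_div_cosh]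
  exact continuous_sinh.div continuous_cosh fun u => (cosh_pos u).ne'

theorem tendsto_tanh_atTop : Tendsto tanh atTop (𝓝 1) := by
  refine tendsto_atTop_isLUB tanh_strictMono.monotone ?_
  rw [← image_univ, tanh_bijOn.image_eq]
  exact isLUB_Ioo (by norm_num)

theorem tendsto_artanh_nhdsLT_one : Tendsto artanh (𝓝[<] 1) atTop := by
  refine tendsto_atTop.2 fun M => ?_
  filter_upwards [Ioo_mem_nhdsLT (tanh_lt_one M)] with x hx
  simpa [artanh_tanh] using artanh_le_artanh (neg_one_lt_tanh M) hx.2 hx.1.le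

theorem one_add_tanh (u : ℝ) : 1 + tanh u = exp u / cosh u := by
  rw [tanh_eq_sinh_div_cosh, ← cosh_add_sinh]
  field_simp [(cosh_pos u).ne']

theorem one_sub_tanh (u : ℝ) : 1 - tanh u = exp (-u) / cosh u := by
  rw [tanh_eq_sinh_div_cosh, ← cosh_sub_sinh]
  field_simp [(cosh_pos u).ne']

end Real

theorem HasDerivAt.mul_eq_one_of_leftInverse {f g : ℝ → ℝ} {f' g' a : ℝ}
    (hg : HasDerivAt g g' (f a)) (hf : HasDerivAt f f' a) (hgf : ∀ᶠ x in 𝓝 a, g (f x) = x) :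
    g' * f' = 1 :=
  ((hg.comp a hf).congr_of_eventuallyEq (hgf.mono fun _ h => h.symm)).unique (hasDerivAt_id a)

theorem HasDerivAt.eq_zero_of_leftInverse_of_tendsto_slope {f g : ℝ → ℝ} {a d : ℝ}
    (hg : HasDerivAt g d (f a)) (hgf : ∀ᶠ x in 𝓝[≤] a, g (f x) = x)
    (hf : ContinuousWithinAt f (Iio a) a) (hslope : Tendsto (slope f a) (𝓝[<] a) atTop) :
    d = 0 := by
  have hfa : g (f a) = a := hgf.self_of_nhdsWithin self_mem_Iic
  have hne : ∀ᶠ x in 𝓝[<] a, f x ≠ f a := (hslope.eventually_gt_atTop 0).mono fun x hx h => by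
    simp [slope_def_field, h] at hx
  have hf' : Tendsto f (𝓝[<] a) (𝓝[≠] f a) := tendsto_nhdsWithin_iff.2 ⟨hf, hne⟩
  refine tendsto_nhds_unique (hg.tendsto_slope.comp hf') ?_
  -- along `f`, the slopes of `g` at `f a` are the reciprocals of those of `f` at `a`
  refine (tendsto_inv_atTop_zero.comp hslope).congr' ?_
  filter_upwards [hne, nhdsWithin_mono a Iio_subset_Iic_self hgf] with x hx hgx
  simp [slope_def_field, hgx, hfa, inv_div]

theorem gammaInv_zero : gammaInv 0 = 0 := by simp [gammaInv]

theorem gammaInv_one : gammaInv 1 = 1 := by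
  have := log_two_pos.ne'
  norm_num [gammaInv]
  field_simp

theorem continuous_gammaInv : Continuous gammaInv := by
  have h : gammaInv = fun x => ((1 - x) * log (1 - x) + (1 + x) * log (1 + x)) / (2 * log 2) := by
    funext x; simp only [gammaInv]; ring
  rw [h]
  exact ((continuous_mul_log.comp (continuous_sub_left 1)).add
    (continuous_mul_log.comp (continuous_const_add 1))).div_const _

theorem hasDerivAt_gammaInv {x : ℝ} (hx : x ∈ Ioo (-1) 1) :
    HasDerivAt gammaInv (artanh x / log 2) x := by
  have h₁ : 1 - x ≠ 0 := by linarith [hx.2]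
  have h₂ : 1 + x ≠ 0 := by linarith [hx.1]
  have hsub : HasDerivAt (fun y => 1 - y) (-1) x := by simpa using (hasDerivAt_id x).const_sub 1
  have hadd : HasDerivAt (fun y => 1 + y) 1 x := by simpa using (hasDerivAt_id x).const_add 1
  refine (((hsub.div_const (2 * log 2)).mul (hsub.log h₁)).add
    ((hadd.div_const (2 * log 2)).mul (hadd.log h₂))).congr_deriv ?_
  rw [artanh_eq_half_log (Ioo_subset_Icc_self hx), log_div h₂ h₁]
  field_simp
  ring

theorem strictMonoOn_gammaInv : StrictMonoOn gammaInv (Icc 0 1) := by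
  refine strictMonoOn_of_hasDerivWithinAt_pos (f' := fun x => artanh x / log 2) (convex_Icc 0 1)
    continuous_gammaInv.continuousOn (fun x hx => ?_) fun x hx => ?_
  all_goals rw [interior_Icc] at hx
  · exact (hasDerivAt_gammaInv ⟨by linarith [hx.1], hx.2⟩).hasDerivWithinAt
  · exact div_pos (artanh_pos hx) log_two_pos

theorem mapsTo_gammaInv_Ioo : MapsTo gammaInv (Ioo 0 1) (Ioo 0 1) := fun x hx => by
  have hx' := Ioo_subset_Icc_self hx
  constructor
  · simpa [gammaInv_zero] using strictMonoOn_gammaInv (left_mem_Icc.2 zero_le_one) hx' hx.1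
  · simpa [gammaInv_one] using strictMonoOn_gammaInv hx' (right_mem_Icc.2 zero_le_one) hx.2

theorem surjOn_gammaInv_Ioo : SurjOn gammaInv (Ioo 0 1) (Ioo 0 1) := by
  have := intermediate_value_Ioo zero_le_one continuous_gammaInv.continuousOn
  rwa [gammaInv_zero, gammaInv_one] at this

theorem artanh_div_log_two_le_slope_gammaInv {x : ℝ} (hx : x ∈ Ico 0 1) :
    artanh x / log 2 ≤ slope gammaInv 1 x := by
  obtain ⟨c, hc, hslope⟩ := exists_hasDerivAt_eq_slope gammaInv (fun y => artanh y / log 2) hx.2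
    continuous_gammaInv.continuousOn fun y hy =>
      hasDerivAt_gammaInv ⟨by linarith [hx.1, hy.1], hy.2⟩
  rw [slope_comm, slope_def_field, ← hslope]
  exact div_le_div_of_nonneg_right (artanh_le_artanh (by linarith [hx.1]) hc.2 hc.1.le)
    log_two_pos.le

theorem tendsto_slope_gammaInv_one : Tendsto (slope gammaInv 1) (𝓝[<] 1) atTop := by
  refine tendsto_atTop_mono' _ ?_
    (tendsto_artanh_nhdsLT_one.atTop_div_const log_two_pos)
  filter_upwards [Ico_mem_nhdsLT zero_lt_one] with x hx
  exact artanh_div_log_two_le_slope_gammaInv hx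

theorem gammaInv_tanh (u : ℝ) : gammaInv (tanh u) = (u * tanh u - log (cosh u)) / log 2 := by
  have hc := (cosh_pos u).ne'
  have := log_two_pos.ne'
  rw [gammaInv, one_sub_tanh, one_add_tanh, log_div (exp_ne_zero _) hc,
    log_div (exp_ne_zero _) hc, log_exp, log_exp, tanh_eq_sinh_div_cosh, ← cosh_sub_sinh,
    ← cosh_add_sinh]
  field_simp
  ring

theorem kFun_zero : kFun 0 = 1 := if_pos rfl

theorem kFun_eq_gammaInv_tanh {t : ℝ} (ht : t ≠ 0) : kFun t = gammaInv (tanh (log 2 / t)) := by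
  have := log_two_pos.ne'
  rw [kFun, if_neg ht, gammaInv_tanh]
  field_simp

theorem mapsTo_kFun : MapsTo kFun (Ici 0) (Ioc 0 1) := fun t ht => by
  rcases (mem_Ici.1 ht).eq_or_lt with rfl | ht
  · simp [kFun_zero]
  · rw [kFun_eq_gammaInv_tanh ht.ne']
    exact Ioo_subset_Ioc_self (mapsTo_gammaInv_Ioo (tanh_mem_Ioo_zero_one (by positivity)))

theorem antitoneOn_kFun : AntitoneOn kFun (Ici 0) := fun s hs t ht hst => by
  rcases (mem_Ici.1 hs).eq_or_lt with rfl | hs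
  · exact kFun_zero ▸ (mapsTo_kFun ht).2
  · have ht := hs.trans_le hst
    rw [kFun_eq_gammaInv_tanh hs.ne', kFun_eq_gammaInv_tanh ht.ne']
    exact strictMonoOn_gammaInv.monotoneOn
      (Ioo_subset_Icc_self (tanh_mem_Ioo_zero_one (by positivity)))
      (Ioo_subset_Icc_self (tanh_mem_Ioo_zero_one (by positivity)))
      (tanh_strictMono.monotone (div_le_div_of_nonneg_left log_two_pos.le hs hst))

theorem continuousOn_kFun : ContinuousOn kFun (Ici 0) := fun t ht => by
  rcases (mem_Ici.1 ht).eq_or_lt with rfl | ht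
  · have hdiv : Tendsto (fun s => log 2 / s) (𝓝[>] 0) atTop := by
      simpa [div_eq_mul_inv] using tendsto_inv_nhdsGT_zero.const_mul_atTop log_two_pos
    have hlim := (continuous_gammaInv.tendsto 1).comp (tendsto_tanh_atTop.comp hdiv)
    rw [← continuousWithinAt_Ioi_iff_Ici, ContinuousWithinAt, kFun_zero, ← gammaInv_one]
    refine hlim.congr' ?_
    filter_upwards [self_mem_nhdsWithin] with s hs using (kFun_eq_gammaInv_tanh hs.ne').symm
  · have hcont : ContinuousAt (fun s => gammaInv (tanh (log 2 / s))) t :=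
      continuous_gammaInv.continuousAt.comp
        (continuous_tanh.continuousAt.comp (continuousAt_const.div continuousAt_id ht.ne'))
    refine (hcont.congr ?_).continuousWithinAt
    filter_upwards [eventually_ne_nhds ht.ne'] with s hs using (kFun_eq_gammaInv_tanh hs).symm

theorem eq_zero_of_hasDerivAt_one_of_leftInvOn_gammaInv {γ : ℝ → ℝ} {d : ℝ}
    (hγ : LeftInvOn γ gammaInv (Icc 0 1)) (hd : HasDerivAt γ d 1) : d = 0 := by
  refine HasDerivAt.eq_zero_of_leftInverse_of_tendsto_slope (f := gammaInv) (gammaInv_one ▸ hd) ?_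
    continuous_gammaInv.continuousWithinAt tendsto_slope_gammaInv_one
  filter_upwards [Icc_mem_nhdsLE zero_lt_one] using hγ

theorem eq_log_two_div_artanh_of_hasDerivAt_gammaInv {γ : ℝ → ℝ} {d x : ℝ}
    (hγ₁ : LeftInvOn γ gammaInv (Icc 0 1)) (hγ₂ : LeftInvOn gammaInv γ (Icc 0 1))
    (hx : x ∈ Ioo 0 1) (hd : HasDerivAt γ d (gammaInv x)) : d = log 2 / artanh x := by
  have hy := mapsTo_gammaInv_Ioo hx
  have hg : HasDerivAt gammaInv (artanh x / log 2) (γ (gammaInv x)) :=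
    (hγ₁ (Ioo_subset_Icc_self hx)).symm ▸ hasDerivAt_gammaInv ⟨by linarith [hx.1], hx.2⟩
  have hmul := hg.mul_eq_one_of_leftInverse hd
    (by filter_upwards [Icc_mem_nhds hy.1 hy.2] using hγ₂)
  rw [eq_div_iff (artanh_pos hx).ne']
  field_simp [log_two_pos.ne'] at hmul
  linarith

/-- `k` is continuous and monotone decreasing on `[0,∞)`, maps into `(0,1]`, and is the
inverse of the derivative `γ′ : (0,1] → [0,∞)` of `γ`, the inverse of `γ⁻¹` on `[0,1]`. -/
theorem kFun_inverse_of_gamma_deriv (γ γ' : ℝ → ℝ)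
    (hγ₁ : ∀ x ∈ Icc (0 : ℝ) 1, γ (gammaInv x) = x)
    (hγ₂ : ∀ y ∈ Icc (0 : ℝ) 1, gammaInv (γ y) = y)
    (hγ' : ∀ y ∈ Ioc (0 : ℝ) 1, HasDerivAt γ (γ' y) y) :
    ContinuousOn kFun (Ici (0 : ℝ)) ∧
    AntitoneOn kFun (Ici (0 : ℝ)) ∧
    MapsTo kFun (Ici (0 : ℝ)) (Ioc (0 : ℝ) 1) ∧
    (∀ y ∈ Ioc (0 : ℝ) 1, 0 ≤ γ' y ∧ kFun (γ' y) = y) ∧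
    (∀ t ∈ Ici (0 : ℝ), γ' (kFun t) = t) := by
  have hγ'_one : γ' 1 = 0 :=
    eq_zero_of_hasDerivAt_one_of_leftInvOn_gammaInv hγ₁ (hγ' 1 ⟨one_pos, le_rfl⟩)
  have hγ'_gammaInv {x : ℝ} (hx : x ∈ Ioo 0 1) : γ' (gammaInv x) = log 2 / artanh x :=
    eq_log_two_div_artanh_of_hasDerivAt_gammaInv hγ₁ hγ₂ hx
      (hγ' _ (Ioo_subset_Ioc_self (mapsTo_gammaInv_Ioo hx)))
  refine ⟨continuousOn_kFun, antitoneOn_kFun, mapsTo_kFun, fun y hy => ?_, fun t ht => ?_⟩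
  · rcases hy.2.eq_or_lt with rfl | hy₁
    · simp [hγ'_one, kFun_zero]
    obtain ⟨x, hx, rfl⟩ := surjOn_gammaInv_Ioo ⟨hy.1, hy₁⟩
    have hpos : 0 < log 2 / artanh x := div_pos log_two_pos (artanh_pos hx)
    rw [hγ'_gammaInv hx, kFun_eq_gammaInv_tanh hpos.ne',
      div_div_cancel₀ log_two_pos.ne', tanh_artanh ⟨by linarith [hx.1], hx.2⟩]
    exact ⟨hpos.le, rfl⟩
  · rcases (mem_Ici.1 ht).eq_or_lt with rfl | ht
    · rw [kFun_zero, hγ'_one]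
    rw [kFun_eq_gammaInv_tanh ht.ne', hγ'_gammaInv (tanh_mem_Ioo_zero_one (by positivity)),
      artanh_tanh, div_div_cancel₀ log_two_pos.ne']
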